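/- For integers 0 ≤ k ≤ n, let T(n,k) = 2·C(n,k)²·C(2n+2,n)/C(2n+2,2k+1) ∈ ℚ. Work in R = ℚ[x,y][[t]], let S₁, S₂ ∈ R have constant term 1 and satisfy S₁² = 1 + 4t·x², S₂² = 1 + 4t·y², and set Φ = ∑_{n≥0} (n+2)·(-t)^{n+1} · ∑_{k=0}^{n} T(n,k)·x^{2k}·y^{2n-2k}. Then (x²-y²)²·S₁·S₂·Φ = x² + y² + 8t·x²·y² - (x²+y²)·S₁·S₂. -/

import Mathlib

/-!
Write `V_c = (1 + 4cX)^{-1/2} = ∑ (-c)ⁿ C(2n,n) Xⁿ`; it is characterised by `V_c(0) = 1` and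
`(1 + 4cX) V_c' = -2c V_c`, which is the recurrence `(n+1) C(2n+2,n+1) = (4n+2) C(2n,n)`.
Since `S₁ V_{x²} = S₂ V_{y²} = 1`, the identity amounts to
`(x²-y²)² Φ + (x²+y²) = (x²+y²+8x²y²t) V_{x²} V_{y²}`.
Both sides have constant term `x²+y²`, and they have the same derivative: the closed form
`(n+1)(n+2) T(n,k) = 2(2k+1)(2n-2k+1) C(2k,k) C(2n-2k,n-k)` says `Φ' = -2 V_{x²}³ V_{y²}³`,
while `V_c' = -2c V_c³`.
-/

noncomputable section

open MvPolynomial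

/-- The triangle A120406: `T(n,k) = 2·C(n,k)²·C(2n+2,n)/C(2n+2,2k+1)`. -/
def Tnk (n k : ℕ) : ℚ :=
  2 * (n.choose k : ℚ) ^ 2 * ((2 * n + 2).choose n : ℚ) / ((2 * n + 2).choose (2 * k + 1) : ℚ)

/-- `ℚ[x,y]`, polynomials in two variables over `ℚ`. -/
abbrev Rxy : Type := MvPolynomial (Fin 2) ℚ

def px : Rxy := X 0
def py : Rxy := X 1

/-- `Φ = ∑_{n≥0} (n+2)(-t)^{n+1} ∑_{k=0}^n T(n,k) x^{2k} y^{2n-2k}` in `ℚ[x,y][[t]]`. -/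
def Phi : PowerSeries Rxy :=
  PowerSeries.mk fun m => if 1 ≤ m then
    MvPolynomial.C (((m + 1 : ℕ) : ℚ) * (-1 : ℚ) ^ m) *
      ∑ k ∈ Finset.range m,
        MvPolynomial.C (Tnk (m - 1) k) * px ^ (2 * k) * py ^ (2 * (m - 1) - 2 * k)
  else 0

open scoped Nat PowerSeries

namespace PowerSeries

variable {R : Type*} [CommRing R]

instance [IsAddTorsionFree R] : IsAddTorsionFree R⟦X⟧ :=
  inferInstanceAs (IsAddTorsionFree ((Unit →₀ ℕ) → R))

theorem coeff_X_mul_derivative (f : R⟦X⟧) (n : ℕ) :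
    coeff n (X * d⁄dX R f) = n * coeff n f := by
  rcases n with _ | n
  · simp
  · rw [coeff_succ_X_mul, coeff_derivative, mul_comm, Nat.cast_succ]

theorem eq_one_of_sq_eq_one [IsAddTorsionFree R] {w : R⟦X⟧} (hw : w ^ 2 = 1)
    (h0 : constantCoeff w = 1) : w = 1 := by
  have hd : 2 * (w * d⁄dX R w) = 0 := by
    simpa [derivative_pow] using congrArg (d⁄dX R) hw
  have h2 : (2 : ℕ) • d⁄dX R w = (2 : ℕ) • 0 := by
    rw [nsmul_eq_mul, smul_zero]
    linear_combination w * hd - 2 * d⁄dX R w * hw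
  refine derivative.ext ?_ (by rw [h0, map_one])
  rw [derivative_one]
  exact nsmul_right_injective two_ne_zero h2

/-- `(1 + 4aX)^{-1/2}`. -/
def invSqrtSeries (a : R) : R⟦X⟧ := mk fun n => (-a) ^ n * n.centralBinom

variable (a : R)

theorem constantCoeff_invSqrtSeries : constantCoeff (invSqrtSeries a) = 1 := by
  simp [invSqrtSeries]

theorem one_add_mul_derivative_invSqrtSeries :
    (1 + C (4 * a) * X) * d⁄dX R (invSqrtSeries a) = -C (2 * a) * invSqrtSeries a := by
  ext n
  have hrec := congrArg (Nat.cast : ℕ → R) (Nat.succ_mul_centralBinom_succ n)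
  push_cast at hrec
  rw [add_mul, one_mul, mul_assoc, map_add, coeff_C_mul, coeff_X_mul_derivative, coeff_derivative,
    neg_mul, map_neg, coeff_C_mul]
  simp only [invSqrtSeries, coeff_mk]
  linear_combination (-a) ^ n * (-a) * hrec

theorem invSqrtSeries_sq_mul [IsAddTorsionFree R] :
    invSqrtSeries a ^ 2 * (1 + C (4 * a) * X) = 1 := by
  have hode := one_add_mul_derivative_invSqrtSeries a
  refine derivative.ext ?_ (by simp [constantCoeff_invSqrtSeries])
  simp only [Derivation.leibniz, derivative_pow, map_add, derivative_one, derivative_C,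
    derivative_X, smul_eq_mul]
  simp only [map_mul, map_ofNat] at hode ⊢
  linear_combination 2 * invSqrtSeries a * hode

theorem derivative_invSqrtSeries [IsAddTorsionFree R] :
    d⁄dX R (invSqrtSeries a) = -C (2 * a) * invSqrtSeries a ^ 3 := by
  linear_combination (-d⁄dX R (invSqrtSeries a)) * invSqrtSeries_sq_mul a
    + invSqrtSeries a ^ 2 * one_add_mul_derivative_invSqrtSeries a

theorem coeff_invSqrtSeries_pow_three [IsAddTorsionFree R] (n : ℕ) :
    coeff n (invSqrtSeries a ^ 3) = (2 * n + 1) * (-a) ^ n * n.centralBinom := by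
  have h : invSqrtSeries a ^ 3 = invSqrtSeries a + C 2 * (X * d⁄dX R (invSqrtSeries a)) := by
    have hsq := invSqrtSeries_sq_mul a
    rw [derivative_invSqrtSeries]
    simp only [map_mul, map_ofNat] at hsq ⊢
    linear_combination invSqrtSeries a * hsq
  rw [h, map_add, coeff_C_mul, coeff_X_mul_derivative]
  simp only [invSqrtSeries, coeff_mk]
  ring

theorem mul_invSqrtSeries_eq_one [IsAddTorsionFree R] {S : R⟦X⟧} (h0 : constantCoeff S = 1)
    (hS : S ^ 2 = 1 + C (4 * a) * X) : S * invSqrtSeries a = 1 :=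
  eq_one_of_sq_eq_one (by linear_combination invSqrtSeries a ^ 2 * hS + invSqrtSeries_sq_mul a)
    (by rw [map_mul, h0, constantCoeff_invSqrtSeries, one_mul])

/-- After `A² = (1 + 4aX)⁻¹` and `B² = (1 + 4bX)⁻¹`, the derivatives agree because
`8ab (1 + 4aX)(1 + 4bX) - 2 (a + b + 8abX)² = -2 (a - b)²`. -/
theorem sq_sub_mul_add_eq_of_derivative_eq [IsAddTorsionFree R] (a b : R) {F : R⟦X⟧}
    (hF0 : constantCoeff F = 0)
    (hF : d⁄dX R F = -C 2 * invSqrtSeries a ^ 3 * invSqrtSeries b ^ 3) :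
    C ((a - b) ^ 2) * F + C (a + b) =
      (C (a + b) + C (8 * a * b) * X) * (invSqrtSeries a * invSqrtSeries b) := by
  have hA := invSqrtSeries_sq_mul a
  have hB := invSqrtSeries_sq_mul b
  refine derivative.ext ?_ (by simp [hF0, constantCoeff_invSqrtSeries])
  simp only [Derivation.leibniz, map_add, map_mul, derivative_C, derivative_X, hF, smul_eq_mul,
    derivative_invSqrtSeries]
  simp only [map_mul, map_ofNat, map_sub, map_pow] at hA hB ⊢
  set A := invSqrtSeries a
  set B := invSqrtSeries b
  linear_combination (8 * C a * C b * A * B * B ^ 2 * (1 + 4 * C b * X)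
      - 2 * (C a + C b + 8 * C a * C b * X) * C b * A * B ^ 3) * hA
    + (8 * C a * C b * A * B - 2 * (C a + C b + 8 * C a * C b * X) * C a * A ^ 3 * B) * hB

end PowerSeries

theorem mul_Tnk_eq_centralBinom_mul_centralBinom {m k : ℕ} (hk : k ≤ m) :
    ((m : ℚ) + 1) * ((m : ℚ) + 2) * Tnk m k =
      2 * (2 * (k : ℚ) + 1) * (2 * ((m - k : ℕ) : ℚ) + 1) * k.centralBinom *
        (m - k).centralBinom := by
  have h1 : (m.choose k : ℚ) = m ! / (k ! * (m - k)!) := Nat.cast_choose ℚ hk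
  have h2 : (((2 * m + 2).choose m : ℕ) : ℚ) = (2 * m + 2)! / (m ! * (m + 2)!) := by
    rw [Nat.cast_choose ℚ (by omega), show 2 * m + 2 - m = m + 2 by omega]
  have h3 : (((2 * m + 2).choose (2 * k + 1) : ℕ) : ℚ)
      = (2 * m + 2)! / ((2 * k + 1)! * (2 * (m - k) + 1)!) := by
    rw [Nat.cast_choose ℚ (by omega), show 2 * m + 2 - (2 * k + 1) = 2 * (m - k) + 1 by omega]
  have h4 (j : ℕ) : (j.centralBinom : ℚ) = (2 * j)! / (j ! * j !) := by
    rw [Nat.centralBinom, Nat.cast_choose ℚ (by omega), show 2 * j - j = j by omega]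
  have h5 (j : ℕ) : (((2 * j + 1)! : ℕ) : ℚ) = (2 * (j : ℚ) + 1) * ((2 * j)! : ℕ) := by
    rw [Nat.factorial_succ]; push_cast; ring
  have h6 : (((m + 2)! : ℕ) : ℚ) = ((m : ℚ) + 2) * ((m : ℚ) + 1) * (m ! : ℕ) := by
    rw [Nat.factorial_succ, Nat.factorial_succ]; push_cast; ring
  rw [Tnk, h1, h2, h3, h4, h4, h5, h5, h6]
  field_simp

theorem constantCoeff_Phi : PowerSeries.constantCoeff Phi = 0 := by
  simp [Phi]

theorem derivative_Phi :
    d⁄dX Rxy Phi = -PowerSeries.C 2 * PowerSeries.invSqrtSeries (px ^ 2) ^ 3 *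
      PowerSeries.invSqrtSeries (py ^ 2) ^ 3 := by
  refine PowerSeries.ext fun n => ?_
  rw [PowerSeries.coeff_derivative, mul_assoc, neg_mul, map_neg, PowerSeries.coeff_C_mul,
    PowerSeries.coeff_mul, Finset.Nat.sum_antidiagonal_eq_sum_range_succ_mk]
  simp only [Phi, PowerSeries.coeff_mk, if_pos (Nat.le_add_left 1 n), Nat.add_sub_cancel,
    PowerSeries.coeff_invSqrtSeries_pow_three, Finset.mul_sum, Finset.sum_mul,
    ← Finset.sum_neg_distrib]
  refine Finset.sum_congr rfl fun k hk => ?_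
  obtain ⟨j, rfl⟩ := Nat.exists_eq_add_of_le (Finset.mem_range_succ_iff.mp hk)
  have hT := congrArg (MvPolynomial.C : ℚ → Rxy)
    (mul_Tnk_eq_centralBinom_mul_centralBinom (Nat.le_add_right k j))
  rw [Nat.add_sub_cancel_left] at hT ⊢
  rw [show 2 * (k + j) - 2 * k = 2 * j by omega, neg_pow, neg_pow]
  simp only [map_mul, map_add, map_natCast, map_ofNat, map_one, map_pow, map_neg] at hT ⊢
  push_cast at hT ⊢
  linear_combination (-1) ^ (k + j + 1) * px ^ (2 * k) * py ^ (2 * j) * hT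

/-- With `S₁, S₂` the formal square roots (constant term 1) of `1+4tx²` and `1+4ty²`,
`(x²-y²)² S₁ S₂ Φ = x² + y² + 8t x² y² - (x²+y²) S₁ S₂`. -/
theorem phi_identity_a120406
    (S₁ S₂ : PowerSeries Rxy)
    (hS₁c : PowerSeries.constantCoeff S₁ = 1)
    (hS₂c : PowerSeries.constantCoeff S₂ = 1)
    (hS₁ : S₁ ^ 2 = 1 + PowerSeries.C (4 * px ^ 2) * PowerSeries.X)
    (hS₂ : S₂ ^ 2 = 1 + PowerSeries.C (4 * py ^ 2) * PowerSeries.X) :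
    PowerSeries.C ((px ^ 2 - py ^ 2) ^ 2) * S₁ * S₂ * Phi =
      PowerSeries.C (px ^ 2 + py ^ 2)
      + PowerSeries.C (8 * px ^ 2 * py ^ 2) * PowerSeries.X
      - PowerSeries.C (px ^ 2 + py ^ 2) * S₁ * S₂ := by
  have hPhi := PowerSeries.sq_sub_mul_add_eq_of_derivative_eq (px ^ 2) (py ^ 2)
    constantCoeff_Phi derivative_Phi
  have h₁ := PowerSeries.mul_invSqrtSeries_eq_one (px ^ 2) hS₁c hS₁
  have h₂ := PowerSeries.mul_invSqrtSeries_eq_one (py ^ 2) hS₂c hS₂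
  set L :=
    PowerSeries.C (px ^ 2 + py ^ 2) + PowerSeries.C (8 * px ^ 2 * py ^ 2) * PowerSeries.X
  linear_combination (S₁ * S₂) * hPhi + L * (S₂ * PowerSeries.invSqrtSeries (py ^ 2)) * h₁ + L * h₂

end
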